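/- arXiv:1610.07535 — 8 statements merged into one kernel-verified Lean document; each statement's English description precedes it below -/
import Mathlib

section
/- Determinization–harvester lemma: let Σ be a finite type and A : NFA Σ Q an NFA with Q finite. Then there exists a reverse transition function δ' : (Q ⊕ Unit) → (Σ × Set Q) → (Q ⊕ Unit) such that for every word w : List Σ accepted by A there is an accepting run r of A on w with the following property: letting p = List.scanl A.stepSet A.start w (the run of the powerset determinization of A on w), u = w.zip p.dropLast, and r' = (List.scanl δ' (Sum.inr ()) u.reverse).reverse (the backward run of the harvester started in the dummy final state), one has r'.dropLast = (r.dropLast).map Sum.inl. -/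
/-!
Run backwards, the harvester keeps one state of the current powerset state from which the
suffix read so far can be completed to an accepting run; at the start it holds a dummy state
standing for the whole accept set. Every state of `M.stepSet S a` has an `a`-predecessor in `S`,
so the harvester can always move to such a predecessor, and reading its states back to front
gives an accepting run of `M`.
-/

/-- An accepting run of an NFA `B` on a word `w`: a list of states of length
`w.length + 1` starting in a start state, following the step relation, and
ending in an accept state. -/
def IsAcceptingRun {A Q : Type*} (B : NFA A Q) (w : List A) (r : List Q) : Prop :=
  ∃ h : r.length = w.length + 1,
    r[0]'(by omega) ∈ B.start ∧
    (∀ i : ℕ, ∀ hi : i < w.length,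
      r[i + 1]'(by omega) ∈ B.step (r[i]'(by omega)) (w[i]'hi)) ∧
    r[w.length]'(by omega) ∈ B.accept

theorem List.zip_dropLast_scanl_append_singleton {α β : Type*} (f : β → α → β) (b : β)
    (v : List α) (a : α) :
    (v ++ [a]).zip (scanl f b (v ++ [a])).dropLast
      = v.zip (scanl f b v).dropLast ++ [(a, v.foldl f b)] := by
  have hsplit : scanl f b v = (scanl f b v).dropLast ++ [v.foldl f b] := by
    rw [← getLast_scanl scanl_ne_nil, dropLast_append_getLast]
  rw [scanl_append, scanl_singleton, tail_cons, dropLast_concat, hsplit, zip_append (by simp),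
    ← hsplit]
  rfl

namespace NFA

variable {A Q : Type*}

@[simps]
def withAccept (M : NFA A Q) (T : Set Q) : NFA A Q := { M with accept := T }

def harvesterTarget (M : NFA A Q) : Q ⊕ Unit → Set Q
  | .inl q => {q}
  | .inr () => M.accept

open Classical in
/-- The fallback `.inr ()` is never reached on accepted words. -/
noncomputable def harvester (M : NFA A Q) (s : Q ⊕ Unit) (x : A × Set Q) : Q ⊕ Unit :=
  if h : ∃ q ∈ x.2, (M.step q x.1 ∩ M.harvesterTarget s).Nonempty then .inl h.choose else .inr ()

theorem exists_harvester_eq_inl (M : NFA A Q) {s : Q ⊕ Unit} {a : A} {S : Set Q}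
    (h : (M.stepSet S a ∩ M.harvesterTarget s).Nonempty) :
    ∃ q ∈ S, M.harvester s (a, S) = .inl q ∧ (M.step q a ∩ M.harvesterTarget s).Nonempty := by
  obtain ⟨q', hq'S, hq'T⟩ := h
  obtain ⟨q, hqS, hq⟩ := M.mem_stepSet.mp hq'S
  have hex : ∃ q ∈ S, (M.step q a ∩ M.harvesterTarget s).Nonempty := ⟨q, hqS, q', hq, hq'T⟩
  exact ⟨hex.choose, hex.choose_spec.1, dif_pos hex, hex.choose_spec.2⟩

theorem isAcceptingRun_singleton {M : NFA A Q} {q : Q} (hq : q ∈ M.start) {T : Set Q}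
    (hT : q ∈ T) : IsAcceptingRun (M.withAccept T) [] [q] :=
  ⟨rfl, hq, nofun, hT⟩

theorem _root_.IsAcceptingRun.dropLast_append_singleton {M : NFA A Q} {w : List A} {r : List Q}
    {q : Q} (hr : IsAcceptingRun (M.withAccept {q}) w r) : r.dropLast ++ [q] = r := by
  obtain ⟨hlen, -, -, hlast⟩ := hr
  have hne : r ≠ [] := List.ne_nil_of_length_pos (by omega)
  have hget : r.getLast hne = q := by
    rw [List.getLast_eq_getElem]
    simpa [hlen] using hlast
  rw [← hget, List.dropLast_append_getLast]

theorem _root_.IsAcceptingRun.append_singleton {M : NFA A Q} {w : List A} {r : List Q}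
    {q q' : Q} (hr : IsAcceptingRun (M.withAccept {q}) w r) {a : A} (hq' : q' ∈ M.step q a)
    {T : Set Q} (hT : q' ∈ T) : IsAcceptingRun (M.withAccept T) (w ++ [a]) (r ++ [q']) := by
  obtain ⟨hlen, hstart, hstep, hlast⟩ := hr
  have hlast : r[w.length] = q := hlast
  refine ⟨by simp [hlen], ?_, ?_, ?_⟩
  · rwa [List.getElem_append_left]
  · intro i hi
    rcases Nat.lt_or_ge i w.length with hiw | hiw
    · simpa [List.getElem_append, hlen, hiw, Nat.lt_succ_of_lt hiw] using hstep i hiw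
    · obtain rfl : i = w.length := by simp at hi; omega
      simpa [List.getElem_append, hlen, hlast] using hq'
  · simpa [List.getElem_append, hlen] using hT

theorem exists_isAcceptingRun_scanl_harvester (M : NFA A Q) (w : List A) (s : Q ⊕ Unit)
    (h : (M.eval w ∩ M.harvesterTarget s).Nonempty) :
    ∃ r, IsAcceptingRun (M.withAccept (M.harvesterTarget s)) w r ∧
      (List.scanl M.harvester s (w.zip (List.scanl M.stepSet M.start w).dropLast).reverse).reverse
        = r.dropLast.map .inl ++ [s] := by
  induction w using List.reverseRecOn generalizing s with
  | nil =>
    obtain ⟨q, hq, hT⟩ := h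
    exact ⟨[q], isAcceptingRun_singleton hq hT, by simp⟩
  | append_singleton v a ih =>
    rw [eval_append_singleton] at h
    obtain ⟨q, hq, hharv, qf, hqf, hqfT⟩ := M.exists_harvester_eq_inl h
    obtain ⟨r, hr, hscan⟩ := ih (.inl q) ⟨q, hq, rfl⟩
    refine ⟨r ++ [qf], hr.append_singleton hqf hqfT, ?_⟩
    rw [List.zip_dropLast_scanl_append_singleton, List.reverse_append, List.reverse_singleton,
      List.singleton_append, List.scanl_cons, List.reverse_cons]
    have hlast : r.dropLast ++ [q] = r := hr.dropLast_append_singleton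
    rw [show List.foldl M.stepSet M.start v = M.eval v from rfl, hharv, hscan,
      List.dropLast_concat]
    conv_rhs => rw [← hlast, List.map_append, List.map_singleton]

end NFA

theorem determinization_harvester_general {A Q : Type*}
    (M : NFA A Q) :
    ∃ δ' : (Q ⊕ Unit) → (A × Set Q) → (Q ⊕ Unit),
      ∀ w : List A, w ∈ M.accepts →
        ∃ r : List Q, IsAcceptingRun M w r ∧
          (let p : List (Set Q) := List.scanl M.stepSet M.start w
           let u : List (A × Set Q) := w.zip p.dropLast
           let r' : List (Q ⊕ Unit) := (List.scanl δ' (Sum.inr ()) u.reverse).reverse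
           r'.dropLast = (r.dropLast).map Sum.inl) := by
  refine ⟨M.harvester, fun w hw => ?_⟩
  obtain ⟨q, hq, hqT⟩ := M.mem_accepts.mp hw
  obtain ⟨r, hr, hscan⟩ := M.exists_isAcceptingRun_scanl_harvester w (.inr ()) ⟨q, hqT, hq⟩
  exact ⟨r, hr, by simp only [hscan, List.dropLast_concat]⟩

/-- Determinization–harvester lemma: the harvester, run backwards on
the input zipped with the run of the powerset determinization, produces an
accepting run of the original NFA. -/
theorem determinization_harvester {A Q : Type*} [Fintype A] [Fintype Q]
    (M : NFA A Q) :
    ∃ δ' : (Q ⊕ Unit) → (A × Set Q) → (Q ⊕ Unit),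
      ∀ w : List A, w ∈ M.accepts →
        ∃ r : List Q, IsAcceptingRun M w r ∧
          (let p : List (Set Q) := List.scanl M.stepSet M.start w
           let u : List (A × Set Q) := w.zip p.dropLast
           let r' : List (Q ⊕ Unit) := (List.scanl δ' (Sum.inr ()) u.reverse).reverse
           r'.dropLast = (r.dropLast).map Sum.inl) :=
  determinization_harvester_general M
end

section
/- Let Σ, Γ be finite types with decidable equality and let f : List Σ → List Γ be a regular function (in the padded-convolution sense). Then there exists a constant c : ℕ such that for every w : List Σ, (f w).length ≤ w.length + c. -/
/-!
If `f w` outgrew `w` by more than the number of states, the accepted word `tuplefy w (f w)`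
would end in a block, longer than that number, whose first components are all `none`. A loop of
the automaton inside that block can be cut out; the shorter word is still accepted and still
projects onto `w` in its first component, so it must equal `tuplefy w (f w)` itself, which is
absurd.
-/

/-- `tuplefy w v` combines two words in parallel into a word of pairs of length
`max w.length v.length`, padding missing entries with `none`. -/
def tuplefy {A G : Type*} (w : List A) (v : List G) : List (Option A × Option G) :=
  (List.range (max w.length v.length)).map fun i => (w[i]?, v[i]?)

namespace DFA

variable {α σ : Type*} (M : DFA α σ)

theorem exists_sublist_drop_take_append_mem_accepts [Fintype σ] {u : List α}
    (hu : u ∈ M.accepts) (n : ℕ) (hlen : Fintype.card σ ≤ (u.drop n).length) :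
    ∃ z, z.Sublist (u.drop n) ∧ z.length < (u.drop n).length ∧ u.take n ++ z ∈ M.accepts := by
  obtain ⟨q, a, b, c, hsplit, -, hb, ha, hloop, hc⟩ :=
    M.evalFrom_split (s := M.eval (u.take n)) hlen rfl
  refine ⟨a ++ c, ?_, ?_, ?_⟩
  · rw [hsplit]
    exact (List.sublist_append_left a b).append (List.Sublist.refl c)
  · rw [hsplit]
    simp only [List.length_append]
    have := List.length_pos_of_ne_nil hb
    omega
  · have heval (y : List α) : M.eval (u.take n ++ y) = M.evalFrom (M.eval (u.take n)) y :=
      M.evalFrom_of_append _ _ _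
    rw [mem_accepts, ← u.take_append_drop n, heval] at hu
    rw [mem_accepts, heval, evalFrom_of_append, ha, hc]
    exact hu

end DFA

theorem List.filterMap_fst_eq_reduceOption_map_fst {α β : Type*} (l : List (Option α × β)) :
    l.filterMap Prod.fst = (l.map Prod.fst).reduceOption := by
  simp [List.reduceOption, List.filterMap_map]

section tuplefy

variable {A G : Type*}

theorem length_tuplefy (w : List A) (v : List G) :
    (tuplefy w v).length = max w.length v.length := by
  simp [tuplefy]

theorem map_fst_tuplefy (w : List A) (v : List G) :
    (tuplefy w v).map Prod.fst = w.map some ++ List.replicate (v.length - w.length) none := by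
  apply List.ext_getElem?
  intro i
  simp only [tuplefy, List.map_map, List.getElem?_map, List.getElem?_append,
    List.length_map, List.getElem?_replicate]
  split_ifs with h₁ h₂
  · simp [List.getElem?_range (by omega : i < max w.length v.length), List.getElem?_eq_getElem h₁]
  · simp [List.getElem?_range (by omega : i < max w.length v.length), h₁]
  · simp
    omega

theorem fst_eq_none_of_mem_drop_tuplefy {w : List A} {v : List G} {x : Option A × Option G}
    (hx : x ∈ (tuplefy w v).drop w.length) : x.1 = none := by
  have hx₁ := List.mem_map_of_mem (f := Prod.fst) hx
  rw [List.map_drop, map_fst_tuplefy, List.drop_left' (List.length_map _)] at hx₁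
  exact List.eq_of_mem_replicate hx₁

theorem filterMap_fst_take_append_tuplefy {w : List A} {v : List G}
    {z : List (Option A × Option G)} (hz : z ⊆ (tuplefy w v).drop w.length) :
    ((tuplefy w v).take w.length ++ z).filterMap Prod.fst = w := by
  have hz_none : z.filterMap Prod.fst = [] :=
    List.filterMap_eq_nil_iff.2 fun x hx => fst_eq_none_of_mem_drop_tuplefy (hz hx)
  rw [List.filterMap_append, hz_none, List.append_nil, List.filterMap_fst_eq_reduceOption_map_fst,
    List.map_take, map_fst_tuplefy, List.take_left' (List.length_map _)]
  simp [List.reduceOption]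

theorem filterMap_fst_tuplefy (w : List A) (v : List G) :
    (tuplefy w v).filterMap Prod.fst = w := by
  conv_lhs => rw [← (tuplefy w v).take_append_drop w.length]
  exact filterMap_fst_take_append_tuplefy (List.Subset.refl _)

end tuplefy

theorem regular_length_bound_general {A G : Type*}
    (f : List A → List G)
    (hreg : ∃ (σ : Type) (_ : Fintype σ) (M : DFA (Option A × Option G) σ),
      M.accepts = { u : List (Option A × Option G) | ∃ w : List A, tuplefy w (f w) = u }) :
    ∃ c : ℕ, ∀ w : List A, (f w).length ≤ w.length + c := by
  obtain ⟨σ, _, M, hM⟩ := hreg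
  refine ⟨Fintype.card σ, fun w => ?_⟩
  by_contra! hlong
  set u := tuplefy w (f w)
  have hu : u ∈ M.accepts := by rw [hM]; exact ⟨w, rfl⟩
  have hdrop : Fintype.card σ ≤ (u.drop w.length).length := by
    rw [List.length_drop, length_tuplefy]
    omega
  obtain ⟨z, hzsub, hzlen, hz⟩ := M.exists_sublist_drop_take_append_mem_accepts hu w.length hdrop
  rw [hM] at hz
  obtain ⟨w', hw'⟩ := hz
  obtain rfl : w' = w := by
    rw [← filterMap_fst_tuplefy w' (f w'), hw', filterMap_fst_take_append_tuplefy hzsub.subset]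
  have := congrArg List.length hw'
  rw [List.length_append, List.length_take, length_tuplefy] at this
  rw [List.length_drop, length_tuplefy] at hzlen
  omega

/-- A regular function (in the padded-convolution sense) can increase
length by at most a fixed constant. -/
theorem regular_length_bound {A G : Type*}
    [Fintype A] [DecidableEq A] [Fintype G] [DecidableEq G]
    (f : List A → List G)
    (hreg : ∃ (σ : Type) (_ : Fintype σ) (M : DFA (Option A × Option G) σ),
      M.accepts = { u : List (Option A × Option G) | ∃ w : List A, tuplefy w (f w) = u }) :
    ∃ c : ℕ, ∀ w : List A, (f w).length ≤ w.length + c :=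
  regular_length_bound_general f hreg
end

section
/- Krohn–Rhodes theorem (cascade form): let Σ be a finite type and (Q, q0, δ) a transparent Moore machine with Q a finite type and n = Fintype.card Q. Then there exist a family of finite types P : Fin n → Type, a start state s0 : ∀ j, P j, component transition maps Δ : ∀ j : Fin n, Σ → (∀ k : Fin n, k < j → P k) → P j → P j such that for every j, every a : Σ and every tuple t of lower components the map Δ j a t : P j → P j is either bijective (a permutation) or constant (a reset), and a map F : (∀ j, P j) → Q, such that for every w : List Σ, List.scanl δ q0 w = (List.scanl (fun s a => fun j => Δ j a (fun k _ => s k) (s j)) s0 w).map F. -/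
/-!
The cascade state is a complete flag `Q = S₀ ⊋ S₁ ⊋ ⋯ ⊋ S_{n-1}`, `#S_i = n - i`, all of
whose levels contain the current state `q` of the machine, so that `S_{n-1} = {q}`; set
`S₋₁ := Q`. A letter acting as `f : Q → Q` updates level `i` from the old and new levels above
it. If `f` is injective on the old `S_{i-1}`, it agrees there with a permutation `σ` of `Q`, and
`S_i ↦ σ '' S_i` is a permutation of `Finset Q`. Otherwise `f '' S_{i-1}` has at most `n - i`
elements and `S_i` is reset to a fixed set of size `n - i` squeezed between `f '' S_{i-1}` and
the new `S_{i-1}`. Going down the levels, `f '' S_{i-1}` stays inside the new `S_{i-1}`, so the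
new levels form a flag through `f q`.
-/

open Finset Function

theorem List.map_scanl_of_semiconj {α β γ : Type*} {f : β → α → β} {f' : γ → α → γ}
    {g : β → γ} (h : ∀ b a, g (f b a) = f' (g b) a) (b : β) (l : List α) :
    (l.scanl f b).map g = l.scanl f' (g b) := by
  induction l generalizing b with
  | nil => rfl
  | cons a l ih => simp only [List.scanl_cons, List.map_cons, ih, h]

theorem Set.InjOn.exists_perm_eqOn {α : Type*} [Fintype α] {f : α → α} {s : Set α}
    (hf : Set.InjOn f s) : ∃ σ : Equiv.Perm α, Set.EqOn σ f s := by
  obtain ⟨g, hg⟩ := Set.MapsTo.exists_equiv_extend_of_card_eq Finset.card_univ.symm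
    (fun x _ => Finset.mem_coe.mpr (Finset.mem_univ (f x))) hf
  exact ⟨g.trans (Equiv.subtypeUnivEquiv Finset.mem_univ), hg⟩

namespace KrohnRhodes

theorem exists_subset_card_eq_of_not_injOn {α β : Type*} [DecidableEq β] {f : α → β}
    {C : Finset α} {D : Finset β} {m : ℕ} (hC : #C ≤ m + 1) (hD : m ≤ #D)
    (hf : ¬ Set.InjOn f C) : ∃ S, C.image f ∩ D ⊆ S ∧ S ⊆ D ∧ #S = m := by
  have hlt : #(C.image f) < #C := lt_of_le_of_ne card_image_le (mt card_image_iff.mp hf)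
  have hle : #(C.image f ∩ D) ≤ #(C.image f) := card_le_card inter_subset_left
  exact exists_subsuperset_card_eq inter_subset_right (by omega) hD

section Flag

variable {Q : Type*} [Fintype Q]

/-- Level `i - 1` of a ℕ-indexed flag, with `univ` as level `-1`. -/
def prevLevel (s : ℕ → Finset Q) : ℕ → Finset Q
  | 0 => univ
  | i + 1 => s i

theorem prevLevel_congr {s s' : ℕ → Finset Q} {i : ℕ} (h : ∀ k < i, s k = s' k) :
    prevLevel s i = prevLevel s' i := by
  cases i with
  | zero => rfl
  | succ i => exact h i i.lt_succ_self

/-- The subtraction is truncated: the levels from `card Q` on are empty. -/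
structure IsFlagThrough (s : ℕ → Finset Q) (q : Q) : Prop where
  subset_prevLevel : ∀ i, s i ⊆ prevLevel s i
  card_eq : ∀ i, #(s i) = Fintype.card Q - i
  mem : ∀ i < Fintype.card Q, q ∈ s i

theorem exists_isFlagThrough (q : Q) : ∃ s, IsFlagThrough s q := by
  let e₀ := Fintype.equivFin Q
  let e := e₀.trans (Equiv.swap (e₀ q) ⟨0, (e₀ q).pos⟩)
  have he : (e q : ℕ) = 0 := by simp [e]
  refine ⟨fun i => {x | (e x : ℕ) < Fintype.card Q - i}, ⟨?_, fun i => ?_, ?_⟩⟩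
  · rintro (_ | i) x hx
    · exact mem_univ x
    · simp only [prevLevel, mem_filter, mem_univ, true_and] at hx ⊢
      omega
  · rw [card_equiv e (t := {k : Fin (Fintype.card Q) | (k : ℕ) < Fintype.card Q - i}) (by simp),
      Fin.card_filter_val_lt]
    omega
  · intro i hi
    simp only [mem_filter, mem_univ, true_and, he]
    omega

theorem IsFlagThrough.epsilon_eq [Nonempty Q] {s : ℕ → Finset Q} {q : Q}
    (h : IsFlagThrough s q) :
    Classical.epsilon (fun q' => ∀ j : Fin (Fintype.card Q), q' ∈ s j) = q := by
  have hpos : 0 < Fintype.card Q := Fintype.card_pos_iff.mpr ⟨q⟩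
  have hlast := h.card_eq (Fintype.card Q - 1)
  have hq' : _ ∈ s (Fintype.card Q - 1) :=
    Classical.epsilon_spec (p := fun q' => ∀ j : Fin (Fintype.card Q), q' ∈ s j)
      ⟨q, fun j => h.mem j j.2⟩ ⟨Fintype.card Q - 1, by omega⟩
  exact card_le_one.mp (by omega) _ hq' _ (h.mem _ (by omega))

end Flag

section Cascade

variable {Q : Type*} [Fintype Q] [DecidableEq Q] (f : Q → Q)

/-- The new level below the old level `C` and the new level `D`. Intersecting with `D` keeps
the reset target well defined on every input; on flags `C.image f ⊆ D`. -/
noncomputable def levelMap (m : ℕ) (C D : Finset Q) : Finset Q → Finset Q :=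
  if hf : Set.InjOn f C then hf.exists_perm_eqOn.choose.finsetCongr
  else const _ (Classical.epsilon fun S => C.image f ∩ D ⊆ S ∧ S ⊆ D ∧ #S = m)

theorem levelMap_bijective_or_const (m : ℕ) (C D : Finset Q) :
    Bijective (levelMap f m C D) ∨ ∃ p, ∀ S, levelMap f m C D S = p := by
  unfold levelMap
  split_ifs
  · exact .inl (Equiv.bijective _)
  · exact .inr ⟨_, fun _ => rfl⟩

theorem levelMap_spec {m : ℕ} {C D S : Finset Q} (hS : S ⊆ C) (hSm : #S = m)
    (hC : #C ≤ m + 1) (hCD : C.image f ⊆ D) (hD : m ≤ #D) :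
    S.image f ⊆ levelMap f m C D S ∧ levelMap f m C D S ⊆ D ∧ #(levelMap f m C D S) = m := by
  unfold levelMap
  split_ifs with hf
  · have himage : hf.exists_perm_eqOn.choose.finsetCongr S = S.image f := by
      rw [Equiv.finsetCongr_apply, map_eq_image]
      exact image_congr (hf.exists_perm_eqOn.choose_spec.mono hS)
    rw [himage]
    exact ⟨subset_rfl, (image_subset_image hS).trans hCD,
      (card_image_of_injOn (hf.mono hS)).trans hSm⟩
  · obtain ⟨hsup, hsub, hcard⟩ :=
      Classical.epsilon_spec (exists_subset_card_eq_of_not_injOn hC hD hf)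
    have himage : S.image f ⊆ C.image f ∩ D :=
      subset_inter (image_subset_image hS) ((image_subset_image hS).trans hCD)
    exact ⟨himage.trans hsup, hsub, hcard⟩

noncomputable def nextFlag (s : ℕ → Finset Q) : ℕ → Finset Q
  | 0 => levelMap f (Fintype.card Q) univ univ (s 0)
  | i + 1 => levelMap f (Fintype.card Q - (i + 1)) (s i) (nextFlag s i) (s (i + 1))

theorem nextFlag_eq_levelMap (s : ℕ → Finset Q) (i : ℕ) :
    nextFlag f s i =
      levelMap f (Fintype.card Q - i) (prevLevel s i) (prevLevel (nextFlag f s) i) (s i) := by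
  cases i <;> rfl

theorem nextFlag_congr {s s' : ℕ → Finset Q} {i : ℕ} (h : ∀ k ≤ i, s k = s' k) :
    nextFlag f s i = nextFlag f s' i := by
  induction i with
  | zero => simp only [nextFlag, h 0 le_rfl]
  | succ i ih =>
    simp only [nextFlag, h i (by omega), h (i + 1) le_rfl, ih fun k hk => h k (by omega)]

theorem isFlagThrough_nextFlag {s : ℕ → Finset Q} {q : Q} (h : IsFlagThrough s q) :
    IsFlagThrough (nextFlag f s) (f q) := by
  have key : ∀ i, (s i).image f ⊆ nextFlag f s i ∧
      nextFlag f s i ⊆ prevLevel (nextFlag f s) i ∧ #(nextFlag f s i) = Fintype.card Q - i := by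
    intro i
    induction i with
    | zero =>
      exact levelMap_spec f (h.subset_prevLevel 0) (h.card_eq 0) (by simp) (subset_univ _)
        (by simp)
    | succ i ih =>
      refine levelMap_spec f (h.subset_prevLevel (i + 1)) (h.card_eq (i + 1)) ?_ ih.1 ?_
      · rw [h.card_eq i]; omega
      · rw [ih.2.2]; omega
  exact ⟨fun i => (key i).2.1, fun i => (key i).2.2,
    fun i hi => (key i).1 (mem_image_of_mem f (h.mem i hi))⟩

def padLower {n : ℕ} {j : Fin n} (t : ∀ k : Fin n, k < j → Finset Q) (i : ℕ) : Finset Q :=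
  if h : i < j then t ⟨i, h.trans j.2⟩ h else ∅

noncomputable def component (j : Fin (Fintype.card Q)) (t : ∀ k, k < j → Finset Q) :
    Finset Q → Finset Q :=
  levelMap f (Fintype.card Q - j) (prevLevel (padLower t) j)
    (prevLevel (nextFlag f (padLower t)) j)

theorem component_eq_nextFlag (s : ℕ → Finset Q) (j : Fin (Fintype.card Q)) :
    component f j (fun k _ => s k) (s j) = nextFlag f s j := by
  have hpad : ∀ k < (j : ℕ), padLower (fun k (_ : k < j) => s k) k = s k :=
    fun k hk => dif_pos hk
  rw [nextFlag_eq_levelMap, component, prevLevel_congr hpad,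
    prevLevel_congr fun k hk => nextFlag_congr f fun l hl => hpad l (by omega)]

theorem scanl_eq_map_epsilon {A : Type*} [Nonempty Q] (δ : Q → A → Q) {s : ℕ → Finset Q}
    {q : Q} (h : IsFlagThrough s q) (w : List A) :
    w.scanl δ q = (w.scanl (fun s a j => component (δ · a) j (fun k _ => s k) (s j))
      (fun j : Fin (Fintype.card Q) => s j)).map
        fun s => Classical.epsilon fun q' => ∀ j, q' ∈ s j := by
  induction w generalizing s q with
  | nil => simp [h.epsilon_eq]
  | cons a w ih =>
    simp only [List.scanl_cons, List.map_cons, component_eq_nextFlag, h.epsilon_eq]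
    exact congrArg _ (ih (isFlagThrough_nextFlag _ h))

end Cascade

theorem exists_finset_cascade {A Q : Type*} [Fintype Q] [DecidableEq Q] {n : ℕ}
    (hn : Fintype.card Q = n) (q0 : Q) (δ : Q → A → Q) :
    ∃ (s0 : Fin n → Finset Q)
      (Δ : ∀ j : Fin n, A → (∀ k : Fin n, k < j → Finset Q) → Finset Q → Finset Q),
      (∀ j a t, Bijective (Δ j a t) ∨ ∃ p, ∀ x, Δ j a t x = p) ∧
      ∃ F : (Fin n → Finset Q) → Q, ∀ w : List A,
        w.scanl δ q0 = (w.scanl (fun s a j => Δ j a (fun k _ => s k) (s j)) s0).map F := by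
  subst hn
  have : Nonempty Q := ⟨q0⟩
  obtain ⟨s, hs⟩ := exists_isFlagThrough q0
  exact ⟨fun j => s j, fun j a => component (δ · a) j,
    fun j a t => levelMap_bijective_or_const _ _ _ _, _, scanl_eq_map_epsilon δ hs⟩

end KrohnRhodes

theorem krohn_rhodes_cascade_general {A Q : Type*} [Fintype Q]
    (q0 : Q) (δ : Q → A → Q) :
    ∃ (P : Fin (Fintype.card Q) → Type) (_ : ∀ j, Fintype (P j))
      (s0 : ∀ j, P j)
      (Δ : ∀ j : Fin (Fintype.card Q),
        A → (∀ k : Fin (Fintype.card Q), k < j → P k) → P j → P j),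
      (∀ (j : Fin (Fintype.card Q)) (a : A) (t : ∀ k, k < j → P k),
        Function.Bijective (Δ j a t) ∨ ∃ p : P j, ∀ x : P j, Δ j a t x = p) ∧
      ∃ F : (∀ j, P j) → Q,
        ∀ w : List A,
          List.scanl δ q0 w =
            (List.scanl (fun s a => fun j => Δ j a (fun k _ => s k) (s j)) s0 w).map F := by
  -- The components must live in `Type`, so the construction runs on the copy `Fin n` of `Q`.
  let e := Fintype.equivFin Q
  obtain ⟨s0, Δ, hΔ, F, hF⟩ :=
    KrohnRhodes.exists_finset_cascade (Fintype.card_fin _) (e q0) fun i a => e (δ (e.symm i) a)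
  refine ⟨fun _ => Finset (Fin _), fun _ => inferInstance, s0, Δ, hΔ, e.symm ∘ F, fun w => ?_⟩
  rw [← List.map_map, ← hF, List.map_scanl_of_semiconj (f' := δ) (by simp),
    e.symm_apply_apply]

/-- Krohn–Rhodes theorem (cascade form): the run of any transparent
Moore machine with `n` states is computed, via a character-wise map, by a cascade
of `n` permutation-reset components. -/
theorem krohn_rhodes_cascade {A Q : Type*} [Fintype A] [Fintype Q]
    (q0 : Q) (δ : Q → A → Q) :
    ∃ (P : Fin (Fintype.card Q) → Type) (_ : ∀ j, Fintype (P j))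
      (s0 : ∀ j, P j)
      (Δ : ∀ j : Fin (Fintype.card Q),
        A → (∀ k : Fin (Fintype.card Q), k < j → P k) → P j → P j),
      (∀ (j : Fin (Fintype.card Q)) (a : A) (t : ∀ k, k < j → P k),
        Function.Bijective (Δ j a t) ∨ ∃ p : P j, ∀ x : P j, Δ j a t x = p) ∧
      ∃ F : (∀ j, P j) → Q,
        ∀ w : List A,
          List.scanl δ q0 w =
            (List.scanl (fun s a => fun j => Δ j a (fun k _ => s k) (s j)) s0 w).map F :=
  krohn_rhodes_cascade_general q0 δ
end

section
/- Permutation–Reset Lemma: let I and J be finite types with Fintype.card I = Fintype.card J, and let f : I → J be any function. Then there exists g : I → J such that g is either bijective or constant (∃ j, ∀ x, g x = j), and for all x y : I with x ≠ y one has f x ≠ g y. -/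
/-- Permutation–Reset Lemma. -/
theorem permutation_reset_lemma {I J : Type*} [Fintype I] [Fintype J]
    (hcard : Fintype.card I = Fintype.card J) (f : I → J) :
    ∃ g : I → J,
      (Function.Bijective g ∨ ∃ j : J, ∀ x : I, g x = j) ∧
      ∀ x y : I, x ≠ y → f x ≠ g y := by
  by_cases hinj : Function.Injective f
  · exact ⟨f, Or.inl ((Fintype.bijective_iff_injective_and_card f).2 ⟨hinj, hcard⟩),
      fun x y hxy h => hxy (hinj h)⟩
  · have hns : ¬ Function.Surjective f := fun hs =>
      hinj ((Fintype.bijective_iff_surjective_and_card f).2 ⟨hs, hcard⟩ |>.injective)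
    simp only [Function.Surjective, not_forall, not_exists] at hns
    obtain ⟨j, hj⟩ := hns
    exact ⟨fun _ => j, Or.inr ⟨j, fun _ => rfl⟩, fun x y _ h => hj x h⟩
end

section
/- Let Σ be a type, Q a finite type with 2 ≤ Fintype.card Q, and (Q, q0, δ) a transparent Moore machine. Then there exist a start state q̄0 : Q and a transition function δ̄ : Q → Σ → Q such that for every a : Σ the map q ↦ δ̄ q a is either bijective or constant, and for every word w : List Σ and every index i < w.length + 1, the i-th entry of List.scanl δ q0 w is different from the i-th entry of List.scanl δ̄ q̄0 w. -/
/-- For any transparent Moore machine with at least two states there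
is a permutation-reset transparent Moore machine on the same state set whose run
avoids the run of the original machine at every position. -/
theorem avoiding_permutation_reset_machine {A Q : Type*} [Fintype Q]
    (h2 : 2 ≤ Fintype.card Q) (q0 : Q) (δ : Q → A → Q) :
    ∃ (qbar0 : Q) (δbar : Q → A → Q),
      (∀ a : A, Function.Bijective (fun q => δbar q a) ∨ ∃ p : Q, ∀ q : Q, δbar q a = p) ∧
      ∀ (w : List A) (i : ℕ) (hi : i < w.length + 1),
        (List.scanl δ q0 w)[i]'(by simp [List.length_scanl]; omega) ≠
          (List.scanl δbar qbar0 w)[i]'(by simp [List.length_scanl]; omega) := by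
  classical
  obtain ⟨qbar0, hq⟩ := Fintype.exists_ne_of_one_lt_card (by omega) q0
  set δbar : Q → A → Q := fun q a =>
    if h : Function.Surjective (fun q => δ q a) then δ q a
    else Classical.choose (not_forall.mp h) with hδbar
  have key : ∀ (q q' : Q) (a : A), q ≠ q' → δ q a ≠ δbar q' a := by
    intro q q' a hne
    simp only [hδbar]
    split
    · next h =>
      have hb : Function.Bijective (fun q => δ q a) :=
        (Finite.surjective_iff_bijective).mp h
      exact fun hc => hne (hb.injective hc)
    · next h =>
      have := Classical.choose_spec (not_forall.mp h)
      rw [not_exists] at this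
      exact this q
  refine ⟨qbar0, δbar, ?_, ?_⟩
  · intro a
    by_cases h : Function.Surjective (fun q => δ q a)
    · left
      have hb : Function.Bijective (fun q => δ q a) :=
        (Finite.surjective_iff_bijective).mp h
      simpa [hδbar, h] using hb
    · right
      exact ⟨Classical.choose (not_forall.mp h), fun q => by simp [hδbar, h]⟩
  · intro w
    induction w generalizing q0 qbar0 hq with
    | nil =>
      intro i hi
      simp only [List.length_nil] at hi
      have : i = 0 := by omega
      subst this
      simpa using (Ne.symm hq)
    | cons a w ih =>
      intro i hi
      simp only [List.scanl_cons]
      match i with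
      | 0 => simpa using (Ne.symm hq)
      | (j+1) =>
        have hne : δ q0 a ≠ δbar qbar0 a := key _ _ _ (Ne.symm hq)
        have := ih (δ q0 a) (δbar qbar0 a) (Ne.symm hne) j (by simpa using hi)
        simpa using this
end

section
/- Inductive step of the Krohn–Rhodes decomposition: let Σ be a type, Q a finite type with n = Fintype.card Q and 2 ≤ n, and (Q, q0, δ) a transparent Moore machine. Then there exist a permutation-reset transparent Moore machine (Q, q̄0, δ̄) (for every a : Σ the map q ↦ δ̄ q a is bijective or constant), a transparent Moore machine with state type Fin (n-1), input alphabet Σ × Q, start state î0 : Fin (n-1) and transition δ̂ : Fin (n-1) → (Σ × Q) → Fin (n-1), and a map p : Q → Fin (n-1) → Q, such that for every w : List Σ: List.scanl δ q0 w = List.zipWith p (List.scanl δ̄ q̄0 w) (List.scanl δ̂ î0 (w.zip ((List.scanl δ̄ q̄0 w).dropLast))). -/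
/-- Inductive step of the Krohn–Rhodes decomposition: the run of a
transparent Moore machine with `n ≥ 2` states is a character-wise function of the
run of a permutation-reset machine and the run of a machine with `n - 1` states
reading the input together with the output of the first machine. -/
theorem krohn_rhodes_inductive_step {A Q : Type*} [Fintype Q]
    (h2 : 2 ≤ Fintype.card Q) (q0 : Q) (δ : Q → A → Q) :
    ∃ (qbar0 : Q) (δbar : Q → A → Q),
      (∀ a : A, Function.Bijective (fun q => δbar q a) ∨ ∃ p : Q, ∀ q : Q, δbar q a = p) ∧
      ∃ (ihat0 : Fin (Fintype.card Q - 1))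
        (δhat : Fin (Fintype.card Q - 1) → (A × Q) → Fin (Fintype.card Q - 1))
        (p : Q → Fin (Fintype.card Q - 1) → Q),
        ∀ w : List A,
          List.scanl δ q0 w =
            List.zipWith p (List.scanl δbar qbar0 w)
              (List.scanl δhat ihat0 (w.zip ((List.scanl δbar qbar0 w).dropLast))) := by
  classical
  have hpos : 0 < Fintype.card Q := by omega
  have hk : (Fintype.card Q - 1) + 1 = Fintype.card Q := Nat.succ_pred_eq_of_pos hpos
  let e : Q ≃ Fin ((Fintype.card Q - 1) + 1) :=
    (Fintype.equivFin Q).trans (finCongr hk.symm)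
  let dec : Q → Fin (Fintype.card Q - 1) → Q := fun qb i => e.symm ((e qb).succAbove i)
  have hdec : ∀ qb q, q ≠ qb → ∃ i, dec qb i = q := by
    intro qb q h
    obtain ⟨i, hi⟩ := Fin.exists_succAbove_eq (show e q ≠ e qb from fun hh => h (e.injective hh))
    exact ⟨i, by simp [dec, hi]⟩
  let enc : Q → Q → Fin (Fintype.card Q - 1) := fun qb q =>
    if h : q ≠ qb then (hdec qb q h).choose else ⟨0, by omega⟩
  have hde : ∀ qb q, q ≠ qb → dec qb (enc qb q) = q := by
    intro qb q h
    simp only [enc, dif_pos h]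
    exact (hdec qb q h).choose_spec
  have hmiss : ∀ a, ¬ Function.Bijective (fun q => δ q a) → ∃ m : Q, ∀ q, δ q a ≠ m := by
    intro a h
    have hs : ¬ Function.Surjective (fun q => δ q a) := fun hs =>
      h (Finite.surjective_iff_bijective.mp hs)
    rw [Function.Surjective] at hs
    push_neg at hs
    obtain ⟨m, hm⟩ := hs
    exact ⟨m, fun q => hm q⟩
  let δbar : Q → A → Q := fun q a =>
    if h : Function.Bijective (fun q => δ q a) then δ q a else (hmiss a h).choose
  have hinv : ∀ a q qb, q ≠ qb → δ q a ≠ δbar qb a := by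
    intro a q qb h
    by_cases hb : Function.Bijective (fun q => δ q a)
    · simp only [δbar]
      rw [dif_pos hb]
      exact fun hh => h (hb.injective hh)
    · simp only [δbar]
      rw [dif_neg hb]
      exact (hmiss a hb).choose_spec q
  obtain ⟨qb0, hqb0⟩ : ∃ qb0 : Q, q0 ≠ qb0 := by
    obtain ⟨x, hx⟩ := Fintype.exists_ne_of_one_lt_card (by omega) q0
    exact ⟨x, hx.symm⟩
  let δhat : Fin (Fintype.card Q - 1) → (A × Q) → Fin (Fintype.card Q - 1) :=
    fun i aq => enc (δbar aq.2 aq.1) (δ (dec aq.2 i) aq.1)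
  refine ⟨qb0, δbar, ?_, enc qb0 q0, δhat, dec, ?_⟩
  · intro a
    by_cases hb : Function.Bijective (fun q => δ q a)
    · left
      have : (fun q => δbar q a) = fun q => δ q a := by
        funext q; simp only [δbar]; rw [dif_pos hb]
      rw [this]; exact hb
    · right
      exact ⟨(hmiss a hb).choose, fun q => by simp only [δbar]; rw [dif_neg hb]⟩
  · have main : ∀ (w : List A) (q qb : Q), q ≠ qb →
        List.scanl δ q w =
          List.zipWith dec (List.scanl δbar qb w)
            (List.scanl δhat (enc qb q) (w.zip ((List.scanl δbar qb w).dropLast))) := by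
      intro w
      induction w with
      | nil => intro q qb h; simp [hde qb q h]
      | cons a w ih =>
        intro q qb h
        have h1 : δ q a ≠ δbar qb a := hinv a q qb h
        have hne : List.scanl δbar (δbar qb a) w ≠ [] := by
          intro hnil
          have := congrArg List.length hnil
          simp [List.length_scanl] at this
        rw [List.scanl_cons, List.scanl_cons]
        rw [List.dropLast_cons_of_ne_nil hne, List.zip_cons_cons, List.scanl_cons]
        simp only [List.singleton_append, List.zipWith_cons_cons]
        have hstep : δhat (enc qb q) (a, qb) = enc (δbar qb a) (δ q a) := by
          show enc (δbar qb a) (δ (dec qb (enc qb q)) a) = enc (δbar qb a) (δ q a)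
          rw [hde qb q h]
        rw [hde qb q h, hstep]
        rw [ih (δ q a) (δbar qb a) h1]
    exact fun w => main w q0 qb0 hqb0
end

section
/- Let Σ be a type, Q a finite type with decidable equality, and (Q, q0, δ) a permutation-reset transparent Moore machine (for every a : Σ the map q ↦ δ q a is bijective or constant). Then there exist a transition δ̃ : Equiv.Perm Q → Σ → Equiv.Perm Q such that for every a : Σ the map h ↦ δ̃ h a is bijective (a permutation machine on states Equiv.Perm Q with start 1), and a transition δ⃗ : Q → (Σ × Equiv.Perm Q) → Q such that for every input character c : Σ × Equiv.Perm Q the map q ↦ δ⃗ q c is either the identity or constant (a reset machine on states Q with start q0), such that for every w : List Σ: List.scanl δ q0 w = List.zipWith (fun h q => h q) (List.scanl δ̃ 1 w) (List.scanl δ⃗ q0 (w.zip ((List.scanl δ̃ 1 w).dropLast))). -/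
/-!
Let `g a` be the permutation by which a bijective letter `a` acts, and `g a = 1` for a
constant letter. The permutation machine tracks `hₜ = g aₜ * ⋯ * g a₁`, and the second
machine tracks `rₜ = hₜ⁻¹ qₜ`, so that `qₜ = hₜ rₜ`. Under a bijective letter `r` is unchanged,
and under a constant letter with value `p` it becomes `hₜ₊₁⁻¹ p`, independently of `rₜ`; both cases are the single update
`r ↦ hₜ₊₁⁻¹ (δ (hₜ r) a)`.
-/

theorem List.scanl_eq_zipWith_scanl_cascade {A P R Q : Type*} (δ : Q → A → Q)
    (δ₁ : P → A → P) (δ₂ : R → A × P → R) (act : P → R → Q)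
    (hstep : ∀ p r a, δ (act p r) a = act (δ₁ p a) (δ₂ r (a, p)))
    (w : List A) (p₀ : P) (r₀ : R) :
    List.scanl δ (act p₀ r₀) w =
      List.zipWith act (List.scanl δ₁ p₀ w)
        (List.scanl δ₂ r₀ (w.zip (List.scanl δ₁ p₀ w).dropLast)) := by
  induction w generalizing p₀ r₀ with
  | nil => simp
  | cons a w ih =>
    have hne : List.scanl δ₁ (δ₁ p₀ a) w ≠ [] := List.scanl_ne_nil
    rw [List.scanl_cons, List.scanl_cons, List.dropLast_cons_of_ne_nil hne, List.zip_cons_cons,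
      List.scanl_cons, List.zipWith_cons_cons, hstep, ih]

namespace PermutationReset

variable {A Q : Type*} (δ : Q → A → Q)

open scoped Classical in
noncomputable def letterPerm (a : A) : Equiv.Perm Q :=
  if h : Function.Bijective (fun q => δ q a) then Equiv.ofBijective _ h else 1

noncomputable def reset (q : Q) (c : A × Equiv.Perm Q) : Q :=
  (letterPerm δ c.1 * c.2)⁻¹ (δ (c.2 q) c.1)

theorem apply_reset (q : Q) (a : A) (h : Equiv.Perm Q) :
    (letterPerm δ a * h) (reset δ q (a, h)) = δ (h q) a :=
  Equiv.apply_symm_apply _ _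

theorem reset_eq_self {a : A} (ha : Function.Bijective (fun q => δ q a)) (q : Q)
    (h : Equiv.Perm Q) : reset δ q (a, h) = q := by
  rw [reset, Equiv.Perm.inv_def, Equiv.symm_apply_eq, Equiv.Perm.mul_apply, letterPerm, dif_pos ha]
  rfl

theorem reset_eq_of_const {a : A} {p : Q} (ha : ∀ q, δ q a = p) (q : Q) (h : Equiv.Perm Q) :
    reset δ q (a, h) = (letterPerm δ a * h)⁻¹ p := by
  rw [reset, ha]

end PermutationReset

theorem permutationReset_decomposition_general {A Q : Type*}
    (q0 : Q) (δ : Q → A → Q)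
    (hpr : ∀ a : A, Function.Bijective (fun q => δ q a) ∨ ∃ p : Q, ∀ q : Q, δ q a = p) :
    ∃ δperm : Equiv.Perm Q → A → Equiv.Perm Q,
      (∀ a : A, Function.Bijective (fun h => δperm h a)) ∧
      ∃ δreset : Q → (A × Equiv.Perm Q) → Q,
        (∀ c : A × Equiv.Perm Q,
          (∀ q : Q, δreset q c = q) ∨ ∃ p : Q, ∀ q : Q, δreset q c = p) ∧
        ∀ w : List A,
          List.scanl δ q0 w =
            List.zipWith (fun (h : Equiv.Perm Q) (q : Q) => h q)
              (List.scanl δperm 1 w)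
              (List.scanl δreset q0 (w.zip ((List.scanl δperm 1 w).dropLast))) := by
  open PermutationReset in
  refine ⟨fun h a => letterPerm δ a * h, fun a => (Equiv.mulLeft _).bijective, reset δ, ?_, ?_⟩
  · rintro ⟨a, h⟩
    exact (hpr a).imp (reset_eq_self δ · · h)
      fun ⟨p, hp⟩ => ⟨_, fun q => reset_eq_of_const δ hp q h⟩
  · intro w
    simpa using List.scanl_eq_zipWith_scanl_cascade δ _ (reset δ) (fun h q => h q)
      (fun h q a => (apply_reset δ q a h).symm) w 1 q0

/-- Every permutation-reset transparent Moore machine decomposes into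
a permutation machine (on the group of permutations of its states) cascaded with a
reset machine, combined by a character-wise application map. -/
theorem permutationReset_decomposition {A Q : Type*} [Fintype Q] [DecidableEq Q]
    (q0 : Q) (δ : Q → A → Q)
    (hpr : ∀ a : A, Function.Bijective (fun q => δ q a) ∨ ∃ p : Q, ∀ q : Q, δ q a = p) :
    ∃ δperm : Equiv.Perm Q → A → Equiv.Perm Q,
      (∀ a : A, Function.Bijective (fun h => δperm h a)) ∧
      ∃ δreset : Q → (A × Equiv.Perm Q) → Q,
        (∀ c : A × Equiv.Perm Q,
          (∀ q : Q, δreset q c = q) ∨ ∃ p : Q, ∀ q : Q, δreset q c = p) ∧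
        ∀ w : List A,
          List.scanl δ q0 w =
            List.zipWith (fun (h : Equiv.Perm Q) (q : Q) => h q)
              (List.scanl δperm 1 w)
              (List.scanl δreset q0 (w.zip ((List.scanl δperm 1 w).dropLast))) :=
  permutationReset_decomposition_general q0 δ hpr
end

section
/- Every reset transparent Moore machine factors through finitely many copies of the bit-storage machine: let Σ be a type, Q a finite type, q0 : Q, and δ : Q → Σ → Q such that for every a : Σ the map q ↦ δ q a is either the identity or constant. Then there exist n : ℕ, maps g : Fin n → Σ → Option Bool and f : (Fin n → Bool) → Q such that for every w : List Σ and every index i < w.length + 1, the i-th entry of List.scanl δ q0 w equals f applied to the function sending k : Fin n to the i-th entry of List.scanl (fun b (o : Option Bool) => o.getD b) false (w.map (g k)). -/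
theorem scanl_getElem_eq_foldl_take {α β : Type*} (f : β → α → β) :
    ∀ (l : List α) (b : β) (i : ℕ) (h : i < (List.scanl f b l).length),
      (List.scanl f b l)[i] = List.foldl f b (l.take i) := by
  intro l
  induction l with
  | nil =>
    intro b i h
    have hi : i = 0 := by simp [List.length_scanl] at h; omega
    subst hi; simp
  | cons a t ih =>
    intro b i h
    cases i with
    | zero => simp [List.getElem_scanl_zero]
    | succ j =>
      simp only [List.scanl_cons, List.cons_append, List.nil_append, List.getElem_cons_succ,
        List.take_succ_cons, List.foldl_cons]
      exact ih (f b a) j (by simpa [List.length_scanl] using h)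

/-- Every reset transparent Moore machine factors through finitely
many copies of the bit-storage machine via character-wise maps. -/
theorem reset_machine_factors_through_bits {A Q : Type*} [Fintype Q]
    (q0 : Q) (δ : Q → A → Q)
    (hreset : ∀ a : A, (∀ q : Q, δ q a = q) ∨ ∃ p : Q, ∀ q : Q, δ q a = p) :
    ∃ (n : ℕ) (g : Fin n → A → Option Bool) (f : (Fin n → Bool) → Q),
      ∀ (w : List A) (i : ℕ) (hi : i < w.length + 1),
        (List.scanl δ q0 w)[i]'(by simp [List.length_scanl]; omega) =
          f (fun k : Fin n =>
            (List.scanl (fun b (o : Option Bool) => o.getD b) false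
              (w.map (g k)))[i]'(by simp [List.length_scanl]; omega)) := by
  classical
  obtain ⟨n, e⟩ : ∃ n, Nonempty (Fin n ≃ Q) := ⟨Fintype.card Q, ⟨(Fintype.equivFin Q).symm⟩⟩
  obtain ⟨e⟩ := e
  refine ⟨n, fun k a => if h : ∀ q, δ q a = q then none
      else some (decide (e k = ((hreset a).resolve_left h).choose)), ?_, ?_⟩
  · exact fun bits => if h : ∃ k, bits k = true then e h.choose else q0
  have key : ∀ v : List A, (∀ k, List.foldl (fun b (o : Option Bool) => o.getD b) false
        (v.map fun a => if h : ∀ q, δ q a = q then none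
          else some (decide (e k = ((hreset a).resolve_left h).choose))) = false) ∧
        List.foldl δ q0 v = q0 ∨
      ∃ p : Q, (∀ k, List.foldl (fun b (o : Option Bool) => o.getD b) false
        (v.map fun a => if h : ∀ q, δ q a = q then none
          else some (decide (e k = ((hreset a).resolve_left h).choose)))
          = decide (e k = p)) ∧ List.foldl δ q0 v = p := by
    intro v
    induction v using List.reverseRecOn with
    | nil => left; simp
    | append_singleton t a ih =>
      simp only [List.map_append, List.foldl_append, List.map_cons, List.map_nil,
        List.foldl_cons, List.foldl_nil]
      by_cases hid : ∀ q, δ q a = q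
      · rw [hid (List.foldl δ q0 t)]
        simp only [dif_pos hid, Option.getD_none]
        exact ih
      · simp only [dif_neg hid]
        right
        refine ⟨((hreset a).resolve_left hid).choose, fun k => by simp, ?_⟩
        exact ((hreset a).resolve_left hid).choose_spec _
  intro w i hi
  rw [scanl_getElem_eq_foldl_take]
  simp only [scanl_getElem_eq_foldl_take, List.map_take]
  rcases key (List.take i w) with ⟨hb, hs⟩ | ⟨p, hb, hs⟩ <;>
    simp only [List.map_take] at hb
  · rw [hs, dif_neg]
    push_neg
    intro k
    simp [hb k]
  · rw [hs]
    have hex : ∃ k, (decide (e k = p) : Bool) = true := ⟨e.symm p, by simp⟩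
    have hex2 : ∃ k, List.foldl (fun b (o : Option Bool) => o.getD b) false
        (List.take i (List.map (fun a => if h : ∀ q, δ q a = q then none
          else some (decide (e k = ((hreset a).resolve_left h).choose))) w)) = true := by
      simpa [hb] using hex
    rw [dif_pos hex2]
    have := hex2.choose_spec
    rw [hb] at this
    exact ((by simpa using this : e _ = p)).symm
end
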